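/- arXiv:2110.10994 — 5 statements merged into one kernel-verified Lean document; each statement's English description precedes it below -/
import Mathlib

section
/- Any instance of the optimal classification tree problem reduces to an instance of the Optimal Tree Policy problem with horizon H = 1: given data points x_1,...,x_m with labels, classification weights ω_{i,ℓ}, and a class of admissible trees, define a one-period MDP with states {x_1,...,x_m}, actions equal to the set of labels, uniform initial distribution, and costs c_{x_i, ℓ} = ω_{i,ℓ}; then for every admissible tree T and tree policy π ∈ Π_T, m · C(π) equals the weighted classification error of T with class-distributions given by π, so minimizing policy cost is equivalent to minimizing classification error. -/
/-!
With the uniform initial distribution `1/m`, the factor `m` cancels and `m · C(π)` is the sum over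
data points of `∑ ℓ, μ (T i) ℓ * ω i ℓ`; summing the class indicators over the classes picks out the
class `T i` of each point, which gives the same sum for the classification error.
-/

open Finset

theorem mul_sum_one_div_mul {ι K : Type*} [DivisionRing K] (s : Finset ι) {c : K} (hc : c ≠ 0)
    (g : ι → K) : c * ∑ i ∈ s, 1 / c * g i = ∑ i ∈ s, g i := by
  simp [mul_sum, hc]

theorem sum_classes_ite_mul {ι κ L R : Type*} [Fintype ι] [Fintype κ] [Fintype L]
    [DecidableEq κ] [CommSemiring R] (T : ι → κ) (ω : ι → L → R) (μ : κ → L → R) :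
    ∑ k, ∑ i, ∑ ℓ, ω i ℓ * (if T i = k then (1 : R) else 0) * μ k ℓ
      = ∑ i, ∑ ℓ, μ (T i) ℓ * ω i ℓ := by
  rw [sum_comm]
  refine sum_congr rfl fun i _ => ?_
  rw [sum_comm]
  simp only [mul_ite, mul_one, mul_zero, ite_mul, zero_mul, sum_ite_eq, mem_univ, if_true]
  exact sum_congr rfl fun ℓ _ => mul_comm _ _

theorem classification_tree_reduces_to_otp_general
    {L : Type} [Fintype L] (m K : ℕ) (hm : 0 < m)
    (ω : Fin m → L → ℝ)
    (T : Fin m → Fin K) (μ : Fin K → L → ℝ) :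
    (m : ℝ) * (∑ i, (1 / (m : ℝ)) * ∑ ℓ, μ (T i) ℓ * ω i ℓ)
      = ∑ k : Fin K, ∑ i, ∑ ℓ,
          ω i ℓ * (if T i = k then (1 : ℝ) else 0) * μ k ℓ := by
  rw [mul_sum_one_div_mul _ (Nat.cast_ne_zero.mpr hm.ne'), sum_classes_ite_mul]

/-- Any optimal classification tree instance reduces to an Optimal Tree
Policy instance with horizon `H = 1`: taking states to be the data points, actions to be
the labels, a uniform initial distribution, and costs equal to the classification weights,
`m · C(π)` equals the weighted classification error of the tree with class-distributions
given by the policy. -/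
theorem classification_tree_reduces_to_otp
    {L : Type} [Fintype L] (m K : ℕ) (hm : 0 < m)
    (ω : Fin m → L → ℝ) (hω : ∀ i ℓ, 0 ≤ ω i ℓ)
    (T : Fin m → Fin K) (μ : Fin K → L → ℝ)
    (hμ0 : ∀ k ℓ, 0 ≤ μ k ℓ) (hμ1 : ∀ k, ∑ ℓ, μ k ℓ = 1) :
    (m : ℝ) * (∑ i, (1 / (m : ℝ)) * ∑ ℓ, μ (T i) ℓ * ω i ℓ)
      = ∑ k : Fin K, ∑ i, ∑ ℓ,
          ω i ℓ * (if T i = k then (1 : ℝ) else 0) * μ k ℓ :=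
  classification_tree_reduces_to_otp_general m K hm ω T μ
end

section
/- There exists a two-period tree-constrained MDP in which every optimal tree policy is history-dependent: with initial states s_1, s'_1 (each with probability 1/2), one action a_1 at period 1 with zero cost, second-period states s_2, s_3, s_4 all in the same tree class, transitions P(s_3 | s_1,a_1)=0.9, P(s_2 | s_1,a_1)=0.1, P(s_4 | s'_1,a_1)=0.9, P(s_2 | s'_1,a_1)=0.1, two period-2 actions with costs c(s_2,a_2)=c(s_2,a_3)=0, c(s_3,a_2)=10, c(s_3,a_3)=0, c(s_4,a_2)=0, c(s_4,a_3)=10, the history-dependent policy choosing a_3 after s_1 and a_2 after s'_1 achieves cost 0, while every Markovian tree policy (choosing a single second-period action distribution independent of the first state) incurs strictly positive expected cost. -/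
/-!
At `s₃` only `a₂` costs anything and at `s₄` only `a₃` does, each state being reached with
probability `1/2 · 0.9`. So a policy pays `9/2 · (σ s₁ a₂ + σ s'₁ a₃)`: one that may look at the
period-1 state avoids both costly choices, while a Markovian one pays `9/2 · (μ a₂ + μ a₃) = 9/2`.
-/

/-- Second-period costs: states `s₂,s₃,s₄` (indices 0,1,2), actions `a₂,a₃` (indices 0,1):
`c(s₂,·)=0, c(s₃,a₂)=10, c(s₃,a₃)=0, c(s₄,a₂)=0, c(s₄,a₃)=10`. -/
def exCost2 : Fin 3 → Fin 2 → ℝ := ![![0, 0], ![10, 0], ![0, 10]]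

/-- Transitions from the first-period states `s₁, s'₁` (indices 0,1):
`P(s₂|s₁)=0.1, P(s₃|s₁)=0.9, P(s₂|s'₁)=0.1, P(s₄|s'₁)=0.9`. -/
def exTrans2 : Fin 2 → Fin 3 → ℝ := ![![0.1, 0.9, 0], ![0.1, 0, 0.9]]

/-- Expected cost of a Markovian tree policy using distribution `μ` over second-period
actions at all second-period states (first period has a single zero-cost action and
uniform initial distribution over `s₁, s'₁`). -/
noncomputable def markovCost2 (μ : Fin 2 → ℝ) : ℝ :=
  ∑ s1 : Fin 2, (1 / 2) * ∑ s2 : Fin 3, exTrans2 s1 s2 * ∑ a, μ a * exCost2 s2 a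

/-- Expected cost of a history-dependent tree policy using distribution `σ s1` over
second-period actions after first-period state `s1`. -/
noncomputable def histCost2 (σ : Fin 2 → Fin 2 → ℝ) : ℝ :=
  ∑ s1 : Fin 2, (1 / 2) * ∑ s2 : Fin 3, exTrans2 s1 s2 * ∑ a, σ s1 a * exCost2 s2 a

theorem histCost2_eq (σ : Fin 2 → Fin 2 → ℝ) : histCost2 σ = 9 / 2 * (σ 0 0 + σ 1 1) := by
  simp [histCost2, exTrans2, exCost2, Fin.sum_univ_two, Fin.sum_univ_three]
  ring

theorem markovCost2_eq (μ : Fin 2 → ℝ) : markovCost2 μ = 9 / 2 * (μ 0 + μ 1) :=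
  histCost2_eq fun _ => μ

/-- Play `a₃` after `s₁` and `a₂` after `s'₁`. -/
def switchingPolicy : Fin 2 → Fin 2 → ℝ :=
  ![fun a => if a = 1 then 1 else 0, fun a => if a = 0 then 1 else 0]

theorem switchingPolicy_nonneg (s a : Fin 2) : 0 ≤ switchingPolicy s a := by
  fin_cases s <;> fin_cases a <;> simp [switchingPolicy]

theorem sum_switchingPolicy (s : Fin 2) : ∑ a, switchingPolicy s a = 1 := by
  fin_cases s <;> simp [switchingPolicy]

theorem histCost2_switchingPolicy : histCost2 switchingPolicy = 0 := by
  simp [histCost2_eq, switchingPolicy]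

/-- In this two-period tree-constrained MDP, the history-dependent tree
policy choosing `a₃` after `s₁` and `a₂` after `s'₁` achieves expected cost 0, while
every Markovian tree policy incurs strictly positive expected cost. -/
theorem history_dependent_tree_policy_needed :
    (∃ σ : Fin 2 → Fin 2 → ℝ,
      (∀ s a, 0 ≤ σ s a) ∧ (∀ s, ∑ a, σ s a = 1) ∧
      (σ 0 = fun a => if a = (1 : Fin 2) then (1 : ℝ) else 0) ∧
      (σ 1 = fun a => if a = (0 : Fin 2) then (1 : ℝ) else 0) ∧
      histCost2 σ = 0) ∧
    (∀ μ : Fin 2 → ℝ, (∀ a, 0 ≤ μ a) → (∑ a, μ a = 1) → 0 < markovCost2 μ) := by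
  refine ⟨⟨switchingPolicy, switchingPolicy_nonneg, sum_switchingPolicy, rfl, rfl,
    histCost2_switchingPolicy⟩, fun μ _ hμ => ?_⟩
  rw [markovCost2_eq, ← Fin.sum_univ_two, hμ]
  norm_num
end

section
/- In the two-period example with tree class {s_2, s_3, s_4} in period 2, transitions P(s_3|s_1)=0.9, P(s_2|s_1)=0.1, P(s_4|s'_1)=0.9, P(s_2|s'_1)=0.1, initial distribution uniform on {s_1, s'_1}, and costs c(s_3,a_2)=c(s_4,a_3)=10 and all other second-period costs 0, the expected cost of any Markovian tree policy using the randomized second-period distribution (μ(a_2), μ(a_3)) = (q, 1−q) equals 4.5·q + 4.5·(1−q) ≥ 4.5, i.e., every Markovian tree policy has expected cost at least 4.5 while the optimal history-dependent tree policy has cost 0. -/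
/-- With randomized second-period distribution `(q, 1−q)`, the expected cost
of the Markovian tree policy equals `0.5·0.9·10·q + 0.5·0.9·10·(1−q) = 4.5`; every
Markovian tree policy has expected cost at least 4.5, while an optimal history-dependent
tree policy has cost 0. -/
theorem markov_tree_policy_cost_at_least :
    (∀ q : ℝ, 0 ≤ q → q ≤ 1 →
      markovCost2 (fun a => if a = (0 : Fin 2) then q else 1 - q)
        = 0.5 * 0.9 * 10 * q + 0.5 * 0.9 * 10 * (1 - q)) ∧
    (∀ μ : Fin 2 → ℝ, (∀ a, 0 ≤ μ a) → (∑ a, μ a = 1) → 4.5 ≤ markovCost2 μ) ∧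
    (∃ σ : Fin 2 → Fin 2 → ℝ,
      (∀ s a, 0 ≤ σ s a) ∧ (∀ s, ∑ a, σ s a = 1) ∧ histCost2 σ = 0) := by
  refine ⟨fun q hq hq1 => ?_, fun μ h0 hs => ?_, ⟨![![0,1],![1,0]], ?_, ?_, ?_⟩⟩
  · simp [markovCost2, exCost2, exTrans2, Fin.sum_univ_succ]
    ring
  · have h : ∑ a, μ a = 1 := hs
    simp [Fin.sum_univ_succ] at h
    simp [markovCost2, exCost2, exTrans2, Fin.sum_univ_succ]
    nlinarith [h0 0, h0 1]
  · intro s a; fin_cases s <;> fin_cases a <;> norm_num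
  · intro s; fin_cases s <;> simp [Fin.sum_univ_succ]
  · simp [histCost2, exCost2, exTrans2, Fin.sum_univ_succ]
end

section
/- For any fixed sequence of trees T in a finite-horizon tree-constrained MDP, there exists an optimal tree policy (minimizing expected cumulative cost over all history-dependent tree policies compatible with T) that is deterministic: at every period and every history, it assigns probability 1 to a single action per tree class. -/
/-- Expected cumulative cost of a history-dependent policy `π` over the next `n` periods,
starting at period `t` with past history `h` (most recent first) and current state `s`. -/
noncomputable def treeJ {S A : Type} [Fintype S] [Fintype A]
    (π : ℕ → List (S × A) → S → A → ℝ) (P : S → A → S → ℝ) (c : ℕ → S → A → ℝ) :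
    ℕ → ℕ → List (S × A) → S → ℝ
  | 0, _, _, _ => 0
  | n + 1, t, h, s =>
      ∑ a, π t h s a *
        (c t s a + ∑ s', P s a s' * treeJ π P c n (t + 1) ((s, a) :: h) s')

noncomputable def argminA {A : Type} [Fintype A] [Nonempty A] (f : A → ℝ) : A :=
  (Finset.exists_min_image Finset.univ f
    ⟨Classical.arbitrary A, Finset.mem_univ _⟩).choose

lemma argminA_le {A : Type} [Fintype A] [Nonempty A] (f : A → ℝ) (a : A) :
    f (argminA f) ≤ f a :=
  (Finset.exists_min_image Finset.univ f
    ⟨Classical.arbitrary A, Finset.mem_univ _⟩).choose_spec.2 a (Finset.mem_univ a)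

def wgt {S A : Type} (P : S → A → S → ℝ) (p1 : S → ℝ) : List (S × A) → S → ℝ
  | [] => p1
  | (s, a) :: _ => P s a

noncomputable def Jopt {S A : Type} [Fintype S] [Fintype A] [Nonempty A] {K : ℕ}
    (P : S → A → S → ℝ) (c : ℕ → S → A → ℝ) (p1 : S → ℝ) (T : ℕ → S → Fin K) :
    ℕ → ℕ → List (S × A) → S → ℝ
  | 0, _, _, _ => 0
  | n + 1, t, h, s =>
      let a0 := argminA fun a => ∑ s', if T t s' = T t s
        then wgt P p1 h s' *
          (c t s' a + ∑ s'', P s' a s'' * Jopt P c p1 T n (t + 1) ((s', a) :: h) s'')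
        else 0
      c t s a0 + ∑ s', P s a0 s' * Jopt P c p1 T n (t + 1) ((s, a0) :: h) s'

noncomputable def aopt {S A : Type} [Fintype S] [Fintype A] [Nonempty A] {K : ℕ}
    (P : S → A → S → ℝ) (c : ℕ → S → A → ℝ) (p1 : S → ℝ) (T : ℕ → S → Fin K)
    (n t : ℕ) (h : List (S × A)) (s : S) : A :=
  argminA fun a => ∑ s', if T t s' = T t s
    then wgt P p1 h s' *
      (c t s' a + ∑ s'', P s' a s'' * Jopt P c p1 T n (t + 1) ((s', a) :: h) s'')
    else 0

lemma Jopt_succ {S A : Type} [Fintype S] [Fintype A] [Nonempty A] {K : ℕ}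
    (P : S → A → S → ℝ) (c : ℕ → S → A → ℝ) (p1 : S → ℝ) (T : ℕ → S → Fin K)
    (n t : ℕ) (h : List (S × A)) (s : S) :
    Jopt P c p1 T (n + 1) t h s =
      c t s (aopt P c p1 T n t h s) +
        ∑ s', P s (aopt P c p1 T n t h s) s' *
          Jopt P c p1 T n (t + 1) ((s, aopt P c p1 T n t h s) :: h) s' := by
  rw [Jopt, aopt]

lemma aopt_congr {S A : Type} [Fintype S] [Fintype A] [Nonempty A] {K : ℕ}
    (P : S → A → S → ℝ) (c : ℕ → S → A → ℝ) (p1 : S → ℝ) (T : ℕ → S → Fin K)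
    (n t : ℕ) (h : List (S × A)) {s1 s2 : S} (hT : T t s1 = T t s2) :
    aopt P c p1 T n t h s1 = aopt P c p1 T n t h s2 := by
  unfold aopt
  rw [hT]

noncomputable def piD {S A : Type} [Fintype S] [Fintype A] [Nonempty A] [DecidableEq A]
    {K : ℕ} (P : S → A → S → ℝ) (c : ℕ → S → A → ℝ) (p1 : S → ℝ) (T : ℕ → S → Fin K)
    (H : ℕ) : ℕ → List (S × A) → S → A → ℝ :=
  fun t h s a => if a = aopt P c p1 T (H - t - 1) t h s then 1 else 0

lemma treeJ_piD {S A : Type} [Fintype S] [Fintype A] [Nonempty A] [DecidableEq A]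
    {K : ℕ} (P : S → A → S → ℝ) (c : ℕ → S → A → ℝ) (p1 : S → ℝ) (T : ℕ → S → Fin K)
    (H : ℕ) :
    ∀ n t, n + t = H → ∀ h s,
      treeJ (piD P c p1 T H) P c n t h s = Jopt P c p1 T n t h s := by
  intro n
  induction n with
  | zero => intro t _ h s; rw [treeJ, Jopt]
  | succ n ih =>
    intro t ht h s
    have hH : H - t - 1 = n := by omega
    rw [treeJ, Jopt_succ]
    have collapse : ∀ (X : A → ℝ) (a0 : A), (∑ a, (if a = a0 then (1:ℝ) else 0) * X a) = X a0 := by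
      intro X a0
      rw [Finset.sum_eq_single a0]
      · simp
      · intro b _ hb; simp [hb]
      · intro hb; exact absurd (Finset.mem_univ a0) hb
    have : ∀ a, piD P c p1 T H t h s a = if a = aopt P c p1 T n t h s then 1 else 0 := by
      intro a; rw [piD, hH]
    simp only [this]
    rw [collapse]
    congr 1
    apply Finset.sum_congr rfl
    intro s' _
    rw [ih (t + 1) (by omega)]

lemma regroup {S : Type} [Fintype S] {K : ℕ} (g : S → Fin K) (f : S → ℝ) :
    ∑ s, f s = ∑ k : Fin K, ∑ s, if g s = k then f s else 0 := by
  rw [Finset.sum_comm]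
  apply Finset.sum_congr rfl
  intro s _
  simp

lemma wgt_nonneg {S A : Type} (P : S → A → S → ℝ) (p1 : S → ℝ)
    (hP0 : ∀ s a s', 0 ≤ P s a s') (hp10 : ∀ s, 0 ≤ p1 s) :
    ∀ h s, 0 ≤ wgt P p1 h s := by
  intro h s
  cases h with
  | nil => exact hp10 s
  | cons p _ => exact hP0 p.1 p.2 s

lemma classStep {S A : Type} [Fintype S] [Fintype A]
    (W : S → ℝ) (hW : ∀ s, 0 ≤ W s) (Q : S → A → ℝ) (p : S → A → ℝ)
    (hp0 : ∀ s a, 0 ≤ p s a) (hp1 : ∀ s, ∑ a, p s a = 1)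
    (cls : S → Prop) [DecidablePred cls]
    (hpcls : ∀ s1 s2, cls s1 → cls s2 → p s1 = p s2)
    (astar : S → A) (hastar : ∀ s1 s2, cls s1 → cls s2 → astar s1 = astar s2)
    (hmin : ∀ s, cls s → ∀ a,
      (∑ s', if cls s' then W s' * Q s' (astar s) else 0) ≤
        ∑ s', if cls s' then W s' * Q s' a else 0) :
    ∑ s, (if cls s then W s * Q s (astar s) else 0) ≤
      ∑ s, (if cls s then W s * ∑ a, p s a * Q s a else 0) := by
  by_cases hex : ∃ s0, cls s0
  · obtain ⟨s0, h0⟩ := hex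
    have hL : (∑ s, (if cls s then W s * Q s (astar s) else 0)) =
        ∑ s', if cls s' then W s' * Q s' (astar s0) else 0 := by
      apply Finset.sum_congr rfl
      intro s _
      by_cases hc : cls s
      · rw [if_pos hc, if_pos hc, hastar s s0 hc h0]
      · rw [if_neg hc, if_neg hc]
    have hR : (∑ s, (if cls s then W s * ∑ a, p s a * Q s a else 0)) =
        ∑ a, p s0 a * ∑ s', (if cls s' then W s' * Q s' a else 0) := by
      have step : ∀ s, (if cls s then W s * ∑ a, p s a * Q s a else 0) =
          ∑ a, p s0 a * (if cls s then W s * Q s a else 0) := by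
        intro s
        by_cases hc : cls s
        · simp only [if_pos hc, hpcls s s0 hc h0, Finset.mul_sum]
          apply Finset.sum_congr rfl
          intro a _
          ring
        · simp [if_neg hc]
      calc (∑ s, (if cls s then W s * ∑ a, p s a * Q s a else 0))
          = ∑ s, ∑ a, p s0 a * (if cls s then W s * Q s a else 0) :=
            Finset.sum_congr rfl (fun s _ => step s)
        _ = ∑ a, ∑ s, p s0 a * (if cls s then W s * Q s a else 0) := Finset.sum_comm
        _ = ∑ a, p s0 a * ∑ s', (if cls s' then W s' * Q s' a else 0) := by
            apply Finset.sum_congr rfl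
            intro a _
            rw [Finset.mul_sum]
    rw [hL, hR]
    have hone : (∑ a, p s0 a * (∑ s', if cls s' then W s' * Q s' (astar s0) else 0)) =
        ∑ s', if cls s' then W s' * Q s' (astar s0) else 0 := by
      rw [← Finset.sum_mul, hp1, one_mul]
    rw [← hone]
    apply Finset.sum_le_sum
    intro a _
    exact mul_le_mul_of_nonneg_left (hmin s0 h0 a) (hp0 s0 a)
  · push_neg at hex
    simp [hex]

lemma Jopt_le {S A : Type} [Fintype S] [Fintype A] [Nonempty A] {K : ℕ}
    (P : S → A → S → ℝ) (c : ℕ → S → A → ℝ) (p1 : S → ℝ) (T : ℕ → S → Fin K)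
    (hP0 : ∀ s a s', 0 ≤ P s a s') (hp10 : ∀ s, 0 ≤ p1 s)
    (π' : ℕ → List (S × A) → S → A → ℝ)
    (hπ0 : ∀ t h s a, 0 ≤ π' t h s a) (hπ1 : ∀ t h s, ∑ a, π' t h s a = 1)
    (hπT : ∀ t h s1 s2, T t s1 = T t s2 → π' t h s1 = π' t h s2) :
    ∀ n t h, ∑ s, wgt P p1 h s * Jopt P c p1 T n t h s ≤
      ∑ s, wgt P p1 h s * treeJ π' P c n t h s := by
  intro n
  induction n with
  | zero => intro t h; simp [treeJ, Jopt]
  | succ n ih =>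
    intro t h
    have hWnn := wgt_nonneg P p1 hP0 hp10 h
    -- the "Q" function: one-step cost plus optimal continuation
    have hA : ∑ s, wgt P p1 h s * (∑ a, π' t h s a *
          (c t s a + ∑ s', P s a s' * Jopt P c p1 T n (t + 1) ((s, a) :: h) s')) ≤
        ∑ s, wgt P p1 h s * treeJ π' P c (n + 1) t h s := by
      apply Finset.sum_le_sum
      intro s _
      rw [treeJ]
      apply mul_le_mul_of_nonneg_left _ (hWnn s)
      apply Finset.sum_le_sum
      intro a _
      apply mul_le_mul_of_nonneg_left _ (hπ0 t h s a)
      apply add_le_add_right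
      have := ih (t + 1) ((s, a) :: h)
      simpa [wgt] using this
    refine le_trans ?_ hA
    have hB : ∑ s, wgt P p1 h s * Jopt P c p1 T (n + 1) t h s =
        ∑ s, wgt P p1 h s * (c t s (aopt P c p1 T n t h s) +
          ∑ s', P s (aopt P c p1 T n t h s) s' *
            Jopt P c p1 T n (t + 1) ((s, aopt P c p1 T n t h s) :: h) s') := by
      apply Finset.sum_congr rfl
      intro s _
      rw [Jopt_succ]
    rw [hB]
    rw [regroup (T t), regroup (T t)
      (fun s => wgt P p1 h s * (∑ a, π' t h s a *
        (c t s a + ∑ s', P s a s' * Jopt P c p1 T n (t + 1) ((s, a) :: h) s')))]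
    apply Finset.sum_le_sum
    intro k _
    apply classStep (wgt P p1 h) hWnn
      (fun s a => c t s a + ∑ s', P s a s' * Jopt P c p1 T n (t + 1) ((s, a) :: h) s')
      (fun s a => π' t h s a) (fun s a => hπ0 t h s a) (fun s => hπ1 t h s)
      (fun s => T t s = k)
    · intro s1 s2 h1 h2
      have := hπT t h s1 s2 (h1.trans h2.symm)
      exact this
    · intro s1 s2 h1 h2
      exact aopt_congr P c p1 T n t h (h1.trans h2.symm)
    · intro s hs a
      have := argminA_le (fun a => ∑ s', if T t s' = T t s
        then wgt P p1 h s' *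
          (c t s' a + ∑ s'', P s' a s'' * Jopt P c p1 T n (t + 1) ((s', a) :: h) s'')
        else 0) a
      rw [aopt]
      simpa [hs] using this


/-- For any fixed sequence of trees `T` in a finite-horizon tree-constrained
MDP, there exists an optimal tree policy — minimizing the expected cumulative cost over
all history-dependent tree policies compatible with `T` — that is deterministic: at every
period and history it puts probability 1 on a single action per tree class. -/
theorem exists_deterministic_optimal_tree_policy
    {S A : Type} [Fintype S] [Fintype A] [Nonempty A] [DecidableEq A]
    (H K : ℕ)
    (P : S → A → S → ℝ) (c : ℕ → S → A → ℝ) (p1 : S → ℝ) (T : ℕ → S → Fin K)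
    (hP0 : ∀ s a s', 0 ≤ P s a s') (hP1 : ∀ s a, ∑ s', P s a s' = 1)
    (hp10 : ∀ s, 0 ≤ p1 s) (hp11 : ∑ s, p1 s = 1) :
    ∃ π : ℕ → List (S × A) → S → A → ℝ,
      (∀ t h s a, 0 ≤ π t h s a) ∧
      (∀ t h s, ∑ a, π t h s a = 1) ∧
      (∀ t h s1 s2, T t s1 = T t s2 → π t h s1 = π t h s2) ∧
      (∀ t h s, ∃ a0 : A, π t h s = fun a => if a = a0 then 1 else 0) ∧
      (∀ π' : ℕ → List (S × A) → S → A → ℝ,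
        (∀ t h s a, 0 ≤ π' t h s a) →
        (∀ t h s, ∑ a, π' t h s a = 1) →
        (∀ t h s1 s2, T t s1 = T t s2 → π' t h s1 = π' t h s2) →
        ∑ s, p1 s * treeJ π P c H 0 [] s ≤ ∑ s, p1 s * treeJ π' P c H 0 [] s) := by
  refine ⟨piD P c p1 T H, ?_, ?_, ?_, ?_, ?_⟩
  · intro t h s a
    unfold piD
    split <;> norm_num
  · intro t h s
    simp [piD]
  · intro t h s1 s2 hT
    funext a
    unfold piD
    rw [aopt_congr P c p1 T (H - t - 1) t h hT]
  · intro t h s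
    exact ⟨aopt P c p1 T (H - t - 1) t h s, rfl⟩
  · intro π' hπ0 hπ1 hπT
    have hval := treeJ_piD P c p1 T H H 0 (by omega) [] 
    have hle := Jopt_le P c p1 T hP0 hp10 π' hπ0 hπ1 hπT H 0 []
    calc ∑ s, p1 s * treeJ (piD P c p1 T H) P c H 0 [] s
        = ∑ s, wgt P p1 [] s * Jopt P c p1 T H 0 [] s := by
          apply Finset.sum_congr rfl
          intro s _
          rw [hval s]
          rfl
      _ ≤ ∑ s, wgt P p1 [] s * treeJ π' P c H 0 [] s := hle
      _ = ∑ s, p1 s * treeJ π' P c H 0 [] s := rfl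
end

section
/- Exchange step for derandomization: let π* be an optimal tree policy for a fixed tree sequence T whose decision rules π*_1,...,π*_{t₁−1} are deterministic and π*_{t₁} is randomized. Define π' to agree with π* at all periods except t₁, and at period t₁ let π' choose, for each tree class, a deterministic action minimizing Σ_{s in class} ν_s ( c_{s,a} + Σ_{s'} P_{s,a,s'} v_{t₁+1,s'} ), where ν is the state distribution at period t₁ induced by π*_1,...,π*_{t₁−1} and v_{t₁+1} is the value function of π*_{t₁+1},...,π*_H. Then C(π') ≤ C(π*), so π' is also optimal and is deterministic through period t₁. -/
/-- Exchange step for derandomization. With `ν` the state distribution at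
period `t₁` induced by the (common, deterministic) decisions before `t₁`, and `v` the
continuation value function of the (common) tail decisions after `t₁`, the expected cost
of a policy agreeing with `π*` outside `t₁` decomposes as
`C₀ + Σ_s ν_s Σ_a π_{s,a} (c_{s,a} + Σ_{s'} P_{s,a,s'} v_{s'})`.
Replacing the randomized period-`t₁` rule `π*` by the class-wise deterministic minimizer
`d` yields `C(π') ≤ C(π*)`, so `π'` is also optimal and deterministic through `t₁`. -/
theorem exchange_step_derandomization
    {S S' A : Type} [Fintype S] [Fintype S'] [Fintype A] (K : ℕ)
    (ν : S → ℝ) (hν : ∀ s, 0 ≤ ν s)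
    (c : S → A → ℝ) (P : S → A → S' → ℝ) (v : S' → ℝ)
    (T : S → Fin K) (C0 : ℝ) (d : Fin K → A)
    (hd : ∀ k : Fin K, ∀ a : A,
      (∑ s ∈ Finset.univ.filter (fun s => T s = k),
          ν s * (c s (d k) + ∑ s', P s (d k) s' * v s'))
        ≤ ∑ s ∈ Finset.univ.filter (fun s => T s = k),
            ν s * (c s a + ∑ s', P s a s' * v s'))
    (πstar : Fin K → A → ℝ)
    (hπ0 : ∀ k a, 0 ≤ πstar k a) (hπ1 : ∀ k, ∑ a, πstar k a = 1) :
    C0 + ∑ s, ν s * (c s (d (T s)) + ∑ s', P s (d (T s)) s' * v s')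
      ≤ C0 + ∑ s, ν s * ∑ a, πstar (T s) a *
          (c s a + ∑ s', P s a s' * v s') := by
  refine add_le_add_right ?_ C0
  set f : S → A → ℝ := fun s a => ν s * (c s a + ∑ s', P s a s' * v s') with hf
  have key : ∀ (g : S → A),
      (∑ s, f s (g s)) = ∑ k : Fin K, ∑ s ∈ Finset.univ.filter (fun s => T s = k),
        f s (g s) := by
    intro g
    rw [Finset.sum_comm' (t' := Finset.univ) (s' := fun s => Finset.univ.filter (fun k => T s = k))]
    · simp [Finset.filter_eq]
    · intro s k; simp [eq_comm]
  have lhs : (∑ s, f s (d (T s)))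
      = ∑ k : Fin K, ∑ s ∈ Finset.univ.filter (fun s => T s = k), f s (d k) := by
    rw [key (fun s => d (T s))]
    refine Finset.sum_congr rfl fun k _ => Finset.sum_congr rfl fun s hs => ?_
    simp only [Finset.mem_filter] at hs
    rw [hs.2]
  have rhs : (∑ s, ν s * ∑ a, πstar (T s) a * (c s a + ∑ s', P s a s' * v s'))
      = ∑ k : Fin K, ∑ a, πstar k a *
          ∑ s ∈ Finset.univ.filter (fun s => T s = k), f s a := by
    have : (∑ s, ν s * ∑ a, πstar (T s) a * (c s a + ∑ s', P s a s' * v s'))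
        = ∑ s, ∑ a, πstar (T s) a * f s a := by
      refine Finset.sum_congr rfl fun s _ => ?_
      rw [Finset.mul_sum]; refine Finset.sum_congr rfl fun a _ => ?_; ring
    rw [this]
    rw [show (∑ s, ∑ a, πstar (T s) a * f s a)
        = ∑ k : Fin K, ∑ s ∈ Finset.univ.filter (fun s => T s = k),
            ∑ a, πstar k a * f s a from ?_]
    · refine Finset.sum_congr rfl fun k _ => ?_
      rw [Finset.sum_comm]
      refine Finset.sum_congr rfl fun a _ => ?_
      rw [Finset.mul_sum]
    · rw [Finset.sum_comm' (t' := Finset.univ)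
        (s' := fun s => Finset.univ.filter (fun k => T s = k))]
      · refine Finset.sum_congr rfl fun s _ => ?_
        simp [Finset.filter_eq]
      · intro s k; simp [eq_comm]
  rw [show (∑ s, ν s * (c s (d (T s)) + ∑ s', P s (d (T s)) s' * v s'))
      = ∑ s, f s (d (T s)) from rfl, lhs, rhs]
  refine Finset.sum_le_sum fun k _ => ?_
  calc (∑ s ∈ Finset.univ.filter (fun s => T s = k), f s (d k))
      = ∑ a, πstar k a * ∑ s ∈ Finset.univ.filter (fun s => T s = k), f s (d k) := by
        rw [← Finset.sum_mul, hπ1, one_mul]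
    _ ≤ ∑ a, πstar k a * ∑ s ∈ Finset.univ.filter (fun s => T s = k), f s a := by
        refine Finset.sum_le_sum fun a _ => mul_le_mul_of_nonneg_left (hd k a) (hπ0 k a)
end
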